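/- arXiv:2412.05224 — 2 statements merged into one kernel-verified Lean document; each statement's English description precedes it below -/
import Mathlib

section
/- Let q, z, x₁, x₂, y₁, y₂ ∈ ℂ such that q, z, y₁, y₂ are pairwise distinct, y₁ and y₂ are each distinct from x₁ and x₂, z is distinct from x₁ and x₂, and y₁ − y₂ ≠ c and y₂ − y₁ ≠ c. Define E(y₁,y₂) = h(y₂,z)·( (h(y₁,x₁)·h(y₁,x₂)/g(q,y₁))·(g(y₂,y₁)/h(y₁,y₂)) − f(y₁,z)·(h(q,y₁)/(g(y₁,x₁)·g(y₁,x₂)))·(g(y₁,y₂)/h(y₂,y₁)) ). Then E(y₁,y₂) + E(y₂,y₁) = g(z,y₁)·g(z,y₂)·h(q,z)/(g(z,x₁)·g(z,x₂)). -/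
/-!
With `Q(u) = (u - x₁)(u - x₂)(q - u + c)` one has `h(y₁,x₁) h(y₁,x₂) / g(q,y₁) = Q(y₁ + c) / c³`
and `h(q,y₁) / (g(y₁,x₁) g(y₁,x₂)) = Q(y₁) / c³`, while the right-hand side is
`Q(z) / (c (z - y₁)(z - y₂))`. So `E` depends on `x₁, x₂, q` only through the values of the cubic
`Q`, and the symmetrised identity holds for every polynomial `Q` of degree at most `3`: it is
linear in `Q`, and for a cubic with indeterminate coefficients it is checked by clearing
denominators.
-/

/-- The expression `E(y₁,y₂)` of STATEMENT 8, written with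
`g u v = c/(u-v)`, `f u v = (u-v+c)/(u-v)`, `h u v = (u-v+c)/c`:
`E(y₁,y₂) = h y₂ z * ( (h y₁ x₁ * h y₁ x₂ / g q y₁) * (g y₂ y₁ / h y₁ y₂)
  - f y₁ z * (h q y₁ / (g y₁ x₁ * g y₁ x₂)) * (g y₁ y₂ / h y₂ y₁) )`. -/
noncomputable def E8 (c q z x₁ x₂ y₁ y₂ : ℂ) : ℂ :=
  ((y₂ - z + c) / c) *
    ((((y₁ - x₁ + c) / c) * ((y₁ - x₂ + c) / c) / (c / (q - y₁))) *
        ((c / (y₂ - y₁)) / ((y₁ - y₂ + c) / c)) -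
      ((y₁ - z + c) / (y₁ - z)) *
        (((q - y₁ + c) / c) / ((c / (y₁ - x₁)) * (c / (y₁ - x₂)))) *
        ((c / (y₁ - y₂)) / ((y₂ - y₁ + c) / c)))

open Polynomial

section

variable {K : Type*} [Field K]

noncomputable def kernelTerm (c z : K) (Q : K → K) (y₁ y₂ : K) : K :=
  (y₂ - z + c) / c *
    (Q (y₁ + c) / c ^ 3 * ((c / (y₂ - y₁)) / ((y₁ - y₂ + c) / c)) -
      (y₁ - z + c) / (y₁ - z) * (Q y₁ / c ^ 3) * ((c / (y₁ - y₂)) / ((y₂ - y₁ + c) / c)))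

theorem kernelTerm_add_kernelTerm_swap {c z y₁ y₂ : K} (hc : c ≠ 0) (hzy₁ : z ≠ y₁)
    (hzy₂ : z ≠ y₂) (hy : y₁ ≠ y₂) (h₁ : y₁ - y₂ ≠ c) (h₂ : y₂ - y₁ ≠ c)
    {p : K[X]} (hp : p.natDegree ≤ 3) :
    kernelTerm c z p.eval y₁ y₂ + kernelTerm c z p.eval y₂ y₁
      = p.eval z / (c * (z - y₁) * (z - y₂)) := by
  have h₁' : y₁ - y₂ + c ≠ 0 := fun h => h₂ (by linear_combination -h)
  have h₂' : y₂ - y₁ + c ≠ 0 := fun h => h₁ (by linear_combination -h)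
  have := sub_ne_zero.mpr hzy₁
  have := sub_ne_zero.mpr hzy₂
  have := sub_ne_zero.mpr hzy₁.symm
  have := sub_ne_zero.mpr hzy₂.symm
  have := sub_ne_zero.mpr hy
  have := sub_ne_zero.mpr hy.symm
  simp only [kernelTerm, eval_eq_sum_range' (Nat.lt_succ_of_le hp), Finset.sum_range_succ,
    Finset.sum_range_zero]
  field_simp
  ring

noncomputable def factorCubic (c q x₁ x₂ : K) : K[X] :=
  (X - C x₁) * (X - C x₂) * (C (q + c) - X)

theorem natDegree_factorCubic_le (c q x₁ x₂ : K) : (factorCubic c q x₁ x₂).natDegree ≤ 3 := by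
  unfold factorCubic
  compute_degree

theorem eval_factorCubic_div {c : K} (hc : c ≠ 0) (q z x₁ x₂ y₁ y₂ : K) :
    (factorCubic c q x₁ x₂).eval z / (c * (z - y₁) * (z - y₂))
      = (c / (z - y₁)) * (c / (z - y₂)) * ((q - z + c) / c) /
          ((c / (z - x₁)) * (c / (z - x₂))) := by
  simp only [factorCubic, eval_mul, eval_sub, eval_X, eval_C]
  rw [div_mul_div_comm c (z - x₁), div_div_eq_mul_div]
  field_simp
  ring

end

theorem E8_eq_kernelTerm {c : ℂ} (hc : c ≠ 0) (q z x₁ x₂ y₁ y₂ : ℂ) :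
    E8 c q z x₁ x₂ y₁ y₂ = kernelTerm c z (factorCubic c q x₁ x₂).eval y₁ y₂ := by
  simp only [E8, kernelTerm, factorCubic, eval_mul, eval_sub, eval_X, eval_C]
  congr 2
  · congr 1
    rw [div_div_eq_mul_div]
    field_simp
    ring
  · congr 2
    rw [div_mul_div_comm, div_div_eq_mul_div]
    field_simp
    ring

theorem stmt_8_general (c : ℂ) (hc : c ≠ 0) (q z x₁ x₂ y₁ y₂ : ℂ)
    (hzy₁ : z ≠ y₁) (hzy₂ : z ≠ y₂) (hy : y₁ ≠ y₂)
    (h1 : y₁ - y₂ ≠ c) (h2 : y₂ - y₁ ≠ c) :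
    E8 c q z x₁ x₂ y₁ y₂ + E8 c q z x₁ x₂ y₂ y₁
      = (c / (z - y₁)) * (c / (z - y₂)) * ((q - z + c) / c) /
          ((c / (z - x₁)) * (c / (z - x₂))) := by
  rw [E8_eq_kernelTerm hc, E8_eq_kernelTerm hc, ← eval_factorCubic_div hc]
  exact kernelTerm_add_kernelTerm_swap hc hzy₁ hzy₂ hy h1 h2 (natDegree_factorCubic_le c q x₁ x₂)

/-- For `q, z, y₁, y₂` pairwise distinct, `y₁, y₂` each distinct
from `x₁, x₂`, `z` distinct from `x₁, x₂`, and `y₁ - y₂ ≠ c`, `y₂ - y₁ ≠ c`: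
`E(y₁,y₂) + E(y₂,y₁) = g z y₁ * g z y₂ * h q z / (g z x₁ * g z x₂)`. -/
theorem stmt_8 (c : ℂ) (hc : c ≠ 0) (q z x₁ x₂ y₁ y₂ : ℂ)
    (hqz : q ≠ z) (hqy₁ : q ≠ y₁) (hqy₂ : q ≠ y₂)
    (hzy₁ : z ≠ y₁) (hzy₂ : z ≠ y₂) (hy : y₁ ≠ y₂)
    (hy₁x₁ : y₁ ≠ x₁) (hy₁x₂ : y₁ ≠ x₂) (hy₂x₁ : y₂ ≠ x₁) (hy₂x₂ : y₂ ≠ x₂)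
    (hzx₁ : z ≠ x₁) (hzx₂ : z ≠ x₂)
    (h1 : y₁ - y₂ ≠ c) (h2 : y₂ - y₁ ≠ c) :
    E8 c q z x₁ x₂ y₁ y₂ + E8 c q z x₁ x₂ y₂ y₁
      = (c / (z - y₁)) * (c / (z - y₂)) * ((q - z + c) / c) /
          ((c / (z - x₁)) * (c / (z - x₂))) :=
  stmt_8_general c hc q z x₁ x₂ y₁ y₂ hzy₁ hzy₂ hy h1 h2
end

section
/- Let D be the diagonal matrix indexed by I with diagonal entries χ_i, i ∈ I, satisfying χ_i·χ_{−i} = 1 for all i ∈ I. Then P·(D⊗D) = (D⊗D)·P and Q·(D⊗D) = (D⊗D)·Q. Consequently, for all u, v ∈ ℂ with u ≠ v and u − v + cκ ≠ 0, where κ = n − 1/2, the R-matrix R(u,v) = Id⊗Id + (c/(u−v))·P − (c/(u−v+cκ))·Q satisfies R(u,v)·(D⊗D) = (D⊗D)·R(u,v). -/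
open Kronecker

/-- The index set `I = {i ∈ ℤ : |i| ≤ n}`, of cardinality `2n+1`. -/
def Idx (n : ℕ) : Type := {i : ℤ // i ∈ Finset.Icc (-(n : ℤ)) (n : ℤ)}

noncomputable instance (n : ℕ) : Fintype (Idx n) :=
  inferInstanceAs (Fintype {i : ℤ // i ∈ Finset.Icc (-(n : ℤ)) (n : ℤ)})

instance (n : ℕ) : DecidableEq (Idx n) :=
  inferInstanceAs (DecidableEq {i : ℤ // i ∈ Finset.Icc (-(n : ℤ)) (n : ℤ)})

/-- Negation `i ↦ -i` on the index set `I`. -/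
def Idx.neg {n : ℕ} (i : Idx n) : Idx n :=
  ⟨-i.1, by
    have h := i.2
    rw [Finset.mem_Icc] at h ⊢
    omega⟩

/- `D ⊗ D` is the diagonal matrix with entries `χ a * χ b`. A matrix commutes with a diagonal
matrix as soon as the diagonal weights agree at both ends of each of its nonzero entries: for `P`
these are the pairs `(a, b), (b, a)`, with the same weight `χ a * χ b`, and for `Q` the pairs
`(-b, b), (-d, d)`, with weight `1` at both ends because `χ (-i) * χ i = 1`. The R-matrix is a
linear combination of `1`, `P` and `Q`. -/

theorem Matrix.commute_diagonal_of_apply_ne_zero {ι R : Type*} [Fintype ι] [DecidableEq ι]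
    [CommSemiring R] {A : Matrix ι ι R} {f : ι → R} (h : ∀ i j, A i j ≠ 0 → f i = f j) :
    Commute A (Matrix.diagonal f) := by
  ext i j
  rw [Matrix.mul_diagonal, Matrix.diagonal_mul]
  by_cases hA : A i j = 0
  · simp [hA]
  · rw [h i j hA, mul_comm]

section

variable {n : ℕ} (χ : Idx n → ℂ)

theorem commute_swap_diagonal_kronecker_diagonal
    {P : Matrix (Idx n × Idx n) (Idx n × Idx n) ℂ}
    (hP : ∀ a b c' d : Idx n,
      P (a, b) (c', d) = (if a = d then 1 else 0) * (if b = c' then 1 else 0)) :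
    Commute P (Matrix.diagonal χ ⊗ₖ Matrix.diagonal χ) := by
  rw [Matrix.diagonal_kronecker_diagonal]
  refine Matrix.commute_diagonal_of_apply_ne_zero fun ⟨a, b⟩ ⟨c', d⟩ hne => ?_
  obtain ⟨rfl, rfl⟩ : b = c' ∧ a = d := by simpa [hP] using hne
  exact mul_comm _ _

theorem commute_contraction_diagonal_kronecker_diagonal
    (hχ : ∀ i : Idx n, χ i * χ (Idx.neg i) = 1)
    {Q : Matrix (Idx n × Idx n) (Idx n × Idx n) ℂ}
    (hQ : ∀ a b c' d : Idx n,
      Q (a, b) (c', d) = (if a = Idx.neg b then 1 else 0) * (if c' = Idx.neg d then 1 else 0)) :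
    Commute Q (Matrix.diagonal χ ⊗ₖ Matrix.diagonal χ) := by
  rw [Matrix.diagonal_kronecker_diagonal]
  refine Matrix.commute_diagonal_of_apply_ne_zero fun ⟨a, b⟩ ⟨c', d⟩ hne => ?_
  obtain ⟨rfl, rfl⟩ : c' = Idx.neg d ∧ a = Idx.neg b := by simpa [hQ] using hne
  simp only [mul_comm (χ (Idx.neg _)), hχ]

end

theorem stmt_13_general (n : ℕ) (c : ℂ)
    (χ : Idx n → ℂ) (hχ : ∀ i : Idx n, χ i * χ (Idx.neg i) = 1)
    (P Q : Matrix (Idx n × Idx n) (Idx n × Idx n) ℂ)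
    (hP : ∀ a b c' d : Idx n,
      P (a, b) (c', d) = (if a = d then 1 else 0) * (if b = c' then 1 else 0))
    (hQ : ∀ a b c' d : Idx n,
      Q (a, b) (c', d) = (if a = Idx.neg b then 1 else 0) * (if c' = Idx.neg d then 1 else 0)) :
    P * (Matrix.diagonal χ ⊗ₖ Matrix.diagonal χ)
        = (Matrix.diagonal χ ⊗ₖ Matrix.diagonal χ) * P ∧
    Q * (Matrix.diagonal χ ⊗ₖ Matrix.diagonal χ)
        = (Matrix.diagonal χ ⊗ₖ Matrix.diagonal χ) * Q ∧
    (∀ u v : ℂ, u ≠ v → u - v + c * ((n : ℂ) - 1 / 2) ≠ 0 →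
      (1 + (c / (u - v)) • P - (c / (u - v + c * ((n : ℂ) - 1 / 2))) • Q) *
          (Matrix.diagonal χ ⊗ₖ Matrix.diagonal χ)
        = (Matrix.diagonal χ ⊗ₖ Matrix.diagonal χ) *
            (1 + (c / (u - v)) • P - (c / (u - v + c * ((n : ℂ) - 1 / 2))) • Q)) := by
  have hPD := commute_swap_diagonal_kronecker_diagonal χ hP
  have hQD := commute_contraction_diagonal_kronecker_diagonal χ hχ hQ
  refine ⟨hPD.eq, hQD.eq, fun u v _ _ => ?_⟩
  exact (((Commute.one_left _).add_left (hPD.smul_left _)).sub_left (hQD.smul_left _)).eq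

/-- Let `D = diagonal χ` with `χ_i · χ_{−i} = 1`. With `P` and `Q`
the matrices with entries `P_{(a,b),(c,d)} = δ_{a,d}·δ_{b,c}` and
`Q_{(a,b),(c,d)} = δ_{a,−b}·δ_{c,−d}`, one has `P·(D⊗D) = (D⊗D)·P` and
`Q·(D⊗D) = (D⊗D)·Q`; consequently, for all `u ≠ v` with `u − v + cκ ≠ 0`,
`κ = n − 1/2`, the R-matrix
`R(u,v) = 1 + (c/(u−v))·P − (c/(u−v+cκ))·Q` satisfies
`R(u,v)·(D⊗D) = (D⊗D)·R(u,v)`. -/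
theorem stmt_13 (n : ℕ) (hn : 1 ≤ n) (c : ℂ)
    (χ : Idx n → ℂ) (hχ : ∀ i : Idx n, χ i * χ (Idx.neg i) = 1)
    (P Q : Matrix (Idx n × Idx n) (Idx n × Idx n) ℂ)
    (hP : ∀ a b c' d : Idx n,
      P (a, b) (c', d) = (if a = d then 1 else 0) * (if b = c' then 1 else 0))
    (hQ : ∀ a b c' d : Idx n,
      Q (a, b) (c', d) = (if a = Idx.neg b then 1 else 0) * (if c' = Idx.neg d then 1 else 0)) :
    P * (Matrix.diagonal χ ⊗ₖ Matrix.diagonal χ)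
        = (Matrix.diagonal χ ⊗ₖ Matrix.diagonal χ) * P ∧
    Q * (Matrix.diagonal χ ⊗ₖ Matrix.diagonal χ)
        = (Matrix.diagonal χ ⊗ₖ Matrix.diagonal χ) * Q ∧
    (∀ u v : ℂ, u ≠ v → u - v + c * ((n : ℂ) - 1 / 2) ≠ 0 →
      (1 + (c / (u - v)) • P - (c / (u - v + c * ((n : ℂ) - 1 / 2))) • Q) *
          (Matrix.diagonal χ ⊗ₖ Matrix.diagonal χ)
        = (Matrix.diagonal χ ⊗ₖ Matrix.diagonal χ) *
            (1 + (c / (u - v)) • P - (c / (u - v + c * ((n : ℂ) - 1 / 2))) • Q)) :=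
  stmt_13_general n c χ hχ P Q hP hQ
end
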